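/- arXiv:1610.04144 — 2 statements merged into one kernel-verified Lean document; each statement's English description precedes it below -/
import Mathlib

section
/- Let ε ≠ 0 and let X, Y ∈ gl(N,ℂ), I : ℂᴺ → ℂᵏ, J : ℂᵏ → ℂᴺ satisfy [X,Y] + J∘I = ε·Id_N. If S ⊆ ℂᴺ is a subspace with X(S) ⊆ S, Y(S) ⊆ S, and J(ℂᵏ) ⊆ S, then S = ℂᴺ. -/
/-!
Since `J` lands in `S`, the maps induced by `X` and `Y` on `ℂᴺ/S` satisfy `[X̄, Ȳ] = ε • id`.
A commutator has trace zero while `ε • id` has trace `ε · dim(ℂᴺ/S)`, so the quotient vanishes.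
-/

theorem Module.End.subsingleton_of_commutator_eq_smul_id {K V : Type*} [Field K] [CharZero K]
    [AddCommGroup V] [Module K V] [FiniteDimensional K V] {c : K} (hc : c ≠ 0)
    (f g : Module.End K V) (h : f ∘ₗ g - g ∘ₗ f = c • LinearMap.id) : Subsingleton V := by
  have htrace := congrArg (LinearMap.trace K V) h
  rw [map_sub, LinearMap.trace_comp_comm', sub_self, map_smul, LinearMap.trace_id, smul_eq_mul,
    eq_comm, mul_eq_zero, Nat.cast_eq_zero] at htrace
  exact Module.finrank_zero_iff.mp (htrace.resolve_left hc)

theorem Submodule.mapQ_commutator_eq_smul_id {R M W : Type*} [CommRing R] [AddCommGroup M]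
    [Module R M] [AddCommGroup W] [Module R W] {c : R} (S : Submodule R M)
    {X Y : Module.End R M} {I : M →ₗ[R] W} {J : W →ₗ[R] M}
    (h : X ∘ₗ Y - Y ∘ₗ X + J ∘ₗ I = c • LinearMap.id)
    (hX : S ≤ S.comap X) (hY : S ≤ S.comap Y) (hJ : LinearMap.range J ≤ S) :
    S.mapQ S X hX ∘ₗ S.mapQ S Y hY - S.mapQ S Y hY ∘ₗ S.mapQ S X hX = c • LinearMap.id := by
  refine S.linearMap_qext (LinearMap.ext fun x => ?_)
  have hJI : S.mkQ (J (I x)) = 0 := (Submodule.Quotient.mk_eq_zero S).mpr (hJ ⟨I x, rfl⟩)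
  have hx := congrArg (fun f => S.mkQ (f x)) h
  simp only [LinearMap.add_apply, LinearMap.sub_apply, LinearMap.comp_apply, LinearMap.smul_apply,
    LinearMap.id_apply, map_add, map_sub, map_smul, hJI, add_zero] at hx
  simpa [Submodule.mapQ_apply] using hx

theorem adhm_stability (N k : ℕ) (ε : ℂ) (hε : ε ≠ 0)
    (X Y : (Fin N → ℂ) →ₗ[ℂ] (Fin N → ℂ))
    (I : (Fin N → ℂ) →ₗ[ℂ] (Fin k → ℂ))
    (J : (Fin k → ℂ) →ₗ[ℂ] (Fin N → ℂ))
    (h : X ∘ₗ Y - Y ∘ₗ X + J ∘ₗ I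
      = ε • (LinearMap.id : (Fin N → ℂ) →ₗ[ℂ] (Fin N → ℂ)))
    (S : Submodule ℂ (Fin N → ℂ))
    (hX : ∀ s ∈ S, X s ∈ S) (hY : ∀ s ∈ S, Y s ∈ S)
    (hJ : LinearMap.range J ≤ S) :
    S = ⊤ := by
  have hquot := S.mapQ_commutator_eq_smul_id h hX hY hJ
  have hsub := Module.End.subsingleton_of_commutator_eq_smul_id hε _ _ hquot
  exact Submodule.Quotient.subsingleton_iff.mp hsub
end

section
/- Let V : ℝⁿ → ℝⁿ be a smooth vector field whose total derivative DV(x) is a skew-symmetric linear map for every x ∈ ℝⁿ. Then DV is constant, and hence V is affine: V(x) = A x + b for a fixed skew-symmetric matrix A and a fixed vector b. -/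
/-!
STATEMENT 17: Let V : ℝⁿ → ℝⁿ be a smooth vector field whose total derivative DV(x)
is skew-symmetric for every x. Then DV is constant, and V is affine:
V(x) = A x + b for a fixed skew-symmetric A and fixed b.
-/

open scoped RealInnerProductSpace

theorem killing_fields_are_affine {n : ℕ}
    (V : EuclideanSpace ℝ (Fin n) → EuclideanSpace ℝ (Fin n))
    (hV : ContDiff ℝ (⊤ : ℕ∞) V)
    (hskew : ∀ x u w, ⟪fderiv ℝ V x u, w⟫ = -⟪u, fderiv ℝ V x w⟫) :
    ∃ (A : EuclideanSpace ℝ (Fin n) →L[ℝ] EuclideanSpace ℝ (Fin n))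
      (b : EuclideanSpace ℝ (Fin n)),
      (∀ u w, ⟪A u, w⟫ = -⟪u, A w⟫) ∧
      (∀ x, fderiv ℝ V x = A) ∧
      (∀ x, V x = A x + b) := by
  set g : EuclideanSpace ℝ (Fin n) → EuclideanSpace ℝ (Fin n) →L[ℝ] EuclideanSpace ℝ (Fin n) := fderiv ℝ V with hg_def
  have hgd : Differentiable ℝ g :=
    ((contDiff_infty_iff_fderiv.mp (hV.of_le (by simp))).2).differentiable (by simp)
  -- derivative of x ↦ ⟪g x u, w⟫
  have hder : ∀ (u w x e : EuclideanSpace ℝ (Fin n)),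
      fderiv ℝ (fun y => ⟪g y u, w⟫) x e = ⟪fderiv ℝ g x e u, w⟫ := by
    intro u w x e
    have h1 : HasFDerivAt (fun y => g y u)
        ((g x).comp (0 : EuclideanSpace ℝ (Fin n) →L[ℝ] EuclideanSpace ℝ (Fin n)) + (fderiv ℝ g x).flip u) x :=
      (hgd x).hasFDerivAt.clm_apply (hasFDerivAt_const u x)
    have h2 := (h1.inner ℝ (hasFDerivAt_const w x)).fderiv
    rw [h2]
    simp [fderivInnerCLM]
  -- antisymmetry of second derivative in last two slots
  have hanti : ∀ (x e u w : EuclideanSpace ℝ (Fin n)),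
      ⟪fderiv ℝ g x e u, w⟫ = -⟪fderiv ℝ g x e w, u⟫ := by
    intro x e u w
    have hfun : (fun y => ⟪g y u, w⟫) = fun y => -⟪g y w, u⟫ := by
      funext y
      rw [hskew y u w, real_inner_comm]
    have := hder u w x e
    rw [hfun] at this
    rw [fderiv_fun_neg] at this
    simp only [ContinuousLinearMap.neg_apply] at this
    rw [hder w u x e] at this
    linarith [this]
  -- symmetry of second derivative
  have hsymm : ∀ x e u : EuclideanSpace ℝ (Fin n), fderiv ℝ g x e u = fderiv ℝ g x u e := by
    intro x e u
    exact (hV.contDiffAt.isSymmSndFDerivAt (by rw [minSmoothness_of_isRCLikeNormedField]; exact WithTop.coe_le_coe.mpr le_top)) e u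
  -- second derivative vanishes
  have key : ∀ x : EuclideanSpace ℝ (Fin n), fderiv ℝ g x = 0 := by
    intro x
    refine ContinuousLinearMap.ext fun e => ContinuousLinearMap.ext fun u => ?_
    have hz : ∀ w : EuclideanSpace ℝ (Fin n), ⟪fderiv ℝ g x e u, w⟫ = 0 := by
      intro w
      have h1 : ⟪fderiv ℝ g x e u, w⟫ = -⟪fderiv ℝ g x e w, u⟫ := hanti x e u w
      have h2 : ⟪fderiv ℝ g x e w, u⟫ = ⟪fderiv ℝ g x w e, u⟫ := by rw [hsymm]
      have h3 : ⟪fderiv ℝ g x w e, u⟫ = -⟪fderiv ℝ g x w u, e⟫ := hanti x w e u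
      have h4 : ⟪fderiv ℝ g x w u, e⟫ = ⟪fderiv ℝ g x u w, e⟫ := by rw [hsymm]
      have h5 : ⟪fderiv ℝ g x u w, e⟫ = -⟪fderiv ℝ g x u e, w⟫ := hanti x u w e
      have h6 : ⟪fderiv ℝ g x u e, w⟫ = ⟪fderiv ℝ g x e u, w⟫ := by rw [hsymm]
      linarith
    have : fderiv ℝ g x e u = 0 := by
      have := hz (fderiv ℝ g x e u)
      rwa [real_inner_self_eq_norm_sq, pow_eq_zero_iff (by norm_num), norm_eq_zero] at this
    simpa using this
  refine ⟨g 0, V 0, fun u w => hskew 0 u w, ?_, ?_⟩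
  · intro x
    exact is_const_of_fderiv_eq_zero hgd key x 0
  · intro x
    have hA : ∀ y : EuclideanSpace ℝ (Fin n), g y = g 0 := fun y => is_const_of_fderiv_eq_zero hgd key y 0
    have hF : Differentiable ℝ (fun y => V y - g 0 y) :=
      (hV.differentiable (by simp)).sub (g 0).differentiable
    have hF0 : ∀ y : EuclideanSpace ℝ (Fin n), fderiv ℝ (fun y => V y - g 0 y) y = 0 := by
      intro y
      rw [fderiv_fun_sub ((hV.differentiable (by simp)) y) ((g 0).differentiable y)]
      rw [(g 0).fderiv]
      rw [← hg_def, hA y]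
      simp
    have := is_const_of_fderiv_eq_zero hF hF0 x 0
    have h0 : V x - g 0 x = V 0 - g 0 0 := this
    rw [map_zero] at h0
    have : V x = g 0 x + (V 0 - 0) := by
      rw [← h0]; abel
    simpa using this
end
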